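/- Let I = I⟨a_j,φ_j⟩ be a fragmented ideal that is not gradually fragmented and such that every φ_j is a uniform submeasure (φ_j(x) depends only on |x|). Then the Rothberger number 𝔟(I) equals ℵ₁. -/

import Mathlib

open Set Filter Cardinal

/-- `I` is an ideal on `ω`: contains all finite sets, downward closed, closed under unions. -/
def IsIdealOn (I : Set (Set ℕ)) : Prop :=
  (∀ x : Set ℕ, x.Finite → x ∈ I) ∧
  (∀ x y : Set ℕ, x ⊆ y → y ∈ I → x ∈ I) ∧
  (∀ x y : Set ℕ, x ∈ I → y ∈ I → x ∪ y ∈ I)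

/-- The pair `⟨A, B⟩` is `I`-orthogonal. -/
def IOrthogonal (I A B : Set (Set ℕ)) : Prop := ∀ s ∈ A, ∀ t ∈ B, s ∩ t ∈ I

/-- `C` separates the pair `⟨A, B⟩` with respect to `I`. -/
def ISeparates (I A B : Set (Set ℕ)) (C : Set ℕ) : Prop :=
  (∀ s ∈ A, s ∩ C ∈ I) ∧ (∀ t ∈ B, t \ C ∈ I)

/-- The pair `⟨A, B⟩` is an `I`-gap. -/
def IsIGap (I A B : Set (Set ℕ)) : Prop :=
  IOrthogonal I A B ∧ ∀ C : Set ℕ, ¬ ISeparates I A B C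

/-- There is an `I`-(ω, lam)-gap. -/
def HasOmegaGap (I : Set (Set ℕ)) (lam : Cardinal) : Prop :=
  ∃ A B : Set (Set ℕ), IsIGap I A B ∧ #A = ℵ₀ ∧ #B = lam

/-- `a` is a partition of `ω` into nonempty finite sets. -/
def IsPartitionFin (a : ℕ → Set ℕ) : Prop :=
  (∀ i, (a i).Nonempty) ∧ (∀ i, (a i).Finite) ∧
  (∀ i j, i ≠ j → Disjoint (a i) (a j)) ∧ (⋃ i, a i) = Set.univ

/-- `φ` is a submeasure on the powerset of the set `s`. -/
def IsSubmeasureOn (s : Set ℕ) (φ : Set ℕ → ℝ) : Prop :=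
  φ ∅ = 0 ∧ (∀ x, x ⊆ s → 0 ≤ φ x) ∧
  (∀ x y, x ⊆ y → y ⊆ s → φ x ≤ φ y) ∧
  (∀ x y, x ⊆ s → y ⊆ s → φ (x ∪ y) ≤ φ x + φ y)

/-- `I = I⟨a_i, φ_i⟩` is the fragmented ideal determined by the partition `a`
and the submeasures `φ`. -/
def IsFragmentation (I : Set (Set ℕ)) (a : ℕ → Set ℕ) (φ : ℕ → Set ℕ → ℝ) : Prop :=
  IsPartitionFin a ∧ (∀ i, IsSubmeasureOn (a i) (φ i)) ∧
  ∀ x : Set ℕ, x ∈ I ↔ ∃ K : ℝ, ∀ i, φ i (x ∩ a i) ≤ K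

/-- Gradual fragmentation of `⟨a_i, φ_i⟩`. -/
def GraduallyFragmented (a : ℕ → Set ℕ) (φ : ℕ → Set ℕ → ℝ) : Prop :=
  ∀ k : ℕ, ∃ m : ℕ, ∀ l : ℕ, ∀ᶠ i in atTop,
    ∀ B : Finset (Set ℕ), (∀ b ∈ B, b ⊆ a i) → B.card ≤ l →
      (∀ b ∈ B, φ i b ≤ (k : ℝ)) → φ i (⋃₀ (↑B : Set (Set ℕ))) ≤ (m : ℝ)

/-- The restriction `I ↾ X` is tall. -/
def IsTallOn (I : Set (Set ℕ)) (X : Set ℕ) : Prop :=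
  ∀ Y : Set ℕ, Y ⊆ X → Y.Infinite → ∃ Z, Z ⊆ Y ∧ Z.Infinite ∧ Z ∈ I

def IsTall (I : Set (Set ℕ)) : Prop := IsTallOn I Set.univ

def SomewhereTall (I : Set (Set ℕ)) : Prop := ∃ X : Set ℕ, X ∉ I ∧ IsTallOn I X

def NowhereTall (I : Set (Set ℕ)) : Prop := ¬ SomewhereTall I

/-- The unbounding number `𝔟`. -/
noncomputable def unboundingNumber : Cardinal :=
  sInf {c | ∃ F : Set (ℕ → ℕ), #F = c ∧
    ∀ g : ℕ → ℕ, ∃ f ∈ F, ¬ ∀ᶠ i in atTop, f i ≤ g i}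

/-- The additivity of the Lebesgue-null ideal, `add(N)`. -/
noncomputable def addNull : Cardinal :=
  sInf {c | ∃ F : Set (Set ℝ), #F = c ∧ (∀ s ∈ F, MeasureTheory.volume s = 0) ∧
    MeasureTheory.volume (⋃₀ F) ≠ 0}

/-! In any ideal, a countable orthogonal pair is separated by the diagonal set
`⋃ m, (v₀ ∪ ⋯ ∪ vₘ) \ (u₀ ∪ ⋯ ∪ uₘ)`, so `𝔟(I) ≥ ℵ₁`.

For an `(ω, ℵ₁)`-gap, uniformity turns `φ_i x ≤ t` into `|x| ≤ threshold_i t`. When gradual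
fragmentation fails there are `k` and `l(p)` such that in infinitely many pieces `a_i` some
`l(p)` sets of submeasure `≤ k` have a union of submeasure `> p`. Into distinct such pieces put
blocks: a block in row `j` and of level `p` is cut into at most `l(p)` slots of submeasure just
above `k + j`, and carries a finite list of codes. `A_j` is the union of the blocks in rows
`≤ j`; for `x` in a set of `ℵ₁` reals, `B_x` takes in every block the slot indexed by the
position of a prefix of `x` among the codes. Every slot has submeasure `≤ j + 2k` in row `j`,
so `A_j ∩ B_x ∈ I`. If `C` separated the pair, uncountably many `x` would share a bound `K` on
`B_x \ C`; let `κ` bound `A_{2K} ∩ C`. A block in row `2K` of level `4(κ + k + 2K)` whose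
codes name `l(p)` of these `x` makes `C` contain half of each of its slots, which is more of
the block than `κ` allows. -/

namespace IsFragmentation

variable {I : Set (Set ℕ)} {a : ℕ → Set ℕ} {φ : ℕ → Set ℕ → ℝ} (hI : IsFragmentation I a φ)
include hI

lemma empty_mem : ∅ ∈ I :=
  (hI.2.2 ∅).2 ⟨0, fun i => by rw [empty_inter, (hI.2.1 i).1]⟩

lemma mem_of_subset {x y : Set ℕ} (hxy : x ⊆ y) (hy : y ∈ I) : x ∈ I := by
  obtain ⟨K, hK⟩ := (hI.2.2 y).1 hy
  exact (hI.2.2 x).2 ⟨K, fun i => ((hI.2.1 i).2.2.1 _ _ (inter_subset_inter_left _ hxy)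
    inter_subset_right).trans (hK i)⟩

lemma union_mem {x y : Set ℕ} (hx : x ∈ I) (hy : y ∈ I) : x ∪ y ∈ I := by
  obtain ⟨K, hK⟩ := (hI.2.2 x).1 hx
  obtain ⟨K', hK'⟩ := (hI.2.2 y).1 hy
  refine (hI.2.2 _).2 ⟨K + K', fun i => ?_⟩
  rw [union_inter_distrib_right]
  exact ((hI.2.1 i).2.2.2 _ _ inter_subset_right inter_subset_right).trans
    (add_le_add (hK i) (hK' i))

lemma eq_of_mem_of_mem {i j z : ℕ} (hi : z ∈ a i) (hj : z ∈ a j) : i = j :=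
  by_contra fun h => disjoint_left.1 (hI.1.2.2.1 i j h) hi hj

variable {β : Type*} {ι : β → ℕ} (hι : Function.Injective ι)
include hι

lemma iUnion_inter_iUnion {w w' : β → Set ℕ} (hw : ∀ b, w b ⊆ a (ι b))
    (hw' : ∀ b, w' b ⊆ a (ι b)) : (⋃ b, w b) ∩ (⋃ b, w' b) = ⋃ b, w b ∩ w' b := by
  refine subset_antisymm ?_ (iUnion_subset fun b => inter_subset_inter
    (subset_iUnion w b) (subset_iUnion w' b))
  rintro z ⟨hz, hz'⟩
  obtain ⟨b, hzb⟩ := mem_iUnion.1 hz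
  obtain ⟨b', hzb'⟩ := mem_iUnion.1 hz'
  obtain rfl := hι (hI.eq_of_mem_of_mem (hw b hzb) (hw' b' hzb'))
  exact mem_iUnion.2 ⟨b, hzb, hzb'⟩

lemma iUnion_mem_iff {w : β → Set ℕ} (hw : ∀ b, w b ⊆ a (ι b)) :
    (⋃ b, w b) ∈ I ↔ ∃ K : ℕ, ∀ b, φ (ι b) (w b) ≤ K := by
  have htrace : ∀ i, (⋃ b, w b) ∩ a i = ⋃ b, w b ∩ a i := fun i => iUnion_inter _ _
  have hpiece : ∀ b, (⋃ b', w b' ∩ a (ι b)) = w b := fun b => subset_antisymm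
    (iUnion_subset fun b' z hz => hι (hI.eq_of_mem_of_mem (hw b' hz.1) hz.2) ▸ hz.1)
    fun z hz => mem_iUnion.2 ⟨b, hz, hw b hz⟩
  rw [hI.2.2]
  constructor
  · rintro ⟨K, hK⟩
    exact ⟨⌈K⌉₊, fun b => by simpa [htrace, hpiece] using (hK (ι b)).trans (Nat.le_ceil K)⟩
  · rintro ⟨K, hK⟩
    refine ⟨K, fun i => ?_⟩
    by_cases hi : ∃ b, ι b = i
    · obtain ⟨b, rfl⟩ := hi
      simpa [htrace, hpiece] using hK b
    · have : (⋃ b, w b) ∩ a i = ∅ := by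
        rw [htrace, iUnion_eq_empty]
        exact fun b => subset_empty_iff.1 fun z hz =>
          hi ⟨b, hI.eq_of_mem_of_mem (hw b hz.1) hz.2⟩
      rw [this, (hI.2.1 i).1]
      exact Nat.cast_nonneg K

end IsFragmentation

section Separation

variable {I : Set (Set ℕ)} (hempty : ∅ ∈ I)
  (hdown : ∀ x y : Set ℕ, x ⊆ y → y ∈ I → x ∈ I)
  (hunion : ∀ x y : Set ℕ, x ∈ I → y ∈ I → x ∪ y ∈ I)

include hempty hunion in
lemma biUnion_mem_of_finite {α : Type*} {S : Set α} (hS : S.Finite) {w : α → Set ℕ}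
    (hw : ∀ i ∈ S, w i ∈ I) : ⋃ i ∈ S, w i ∈ I := by
  induction S, hS using Set.Finite.induction_on with
  | empty => simpa using hempty
  | @insert i S _ _ ih =>
    rw [biUnion_insert]
    exact hunion _ _ (hw i (mem_insert i S)) (ih fun j hj => hw j (mem_insert_of_mem i hj))

include hempty hunion in
lemma accumulate_inter_accumulate_mem {u v : ℕ → Set ℕ} (huv : ∀ i j, u i ∩ v j ∈ I) (m : ℕ) :
    accumulate u m ∩ accumulate v m ∈ I := by
  simp only [accumulate_def, iUnion₂_inter, inter_iUnion₂]
  exact biUnion_mem_of_finite hempty hunion (finite_Iic m) fun i _ =>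
    biUnion_mem_of_finite hempty hunion (finite_Iic m) fun j _ => huv j i

include hempty hdown hunion in
lemma iSeparates_range {u v : ℕ → Set ℕ} (huv : ∀ i j, u i ∩ v j ∈ I) :
    ISeparates I (range u) (range v) (⋃ m, accumulate v m \ accumulate u m) := by
  have hmem := accumulate_inter_accumulate_mem hempty hunion huv
  constructor
  · rintro _ ⟨m, rfl⟩
    refine hdown _ _ ?_ (hmem m)
    rintro z ⟨hzu, hzC⟩
    obtain ⟨n, hzv, hzu'⟩ := mem_iUnion.1 hzC
    refine ⟨subset_accumulate hzu, ?_⟩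
    rcases le_total n m with h | h
    · exact monotone_accumulate h hzv
    · exact absurd (monotone_accumulate h (subset_accumulate hzu)) hzu'
  · rintro _ ⟨m, rfl⟩
    refine hdown _ _ ?_ (hmem m)
    intro z hz
    refine ⟨?_, subset_accumulate hz.1⟩
    by_contra hzu
    exact hz.2 (mem_iUnion.2 ⟨m, subset_accumulate hz.1, hzu⟩)

include hempty hdown hunion in
lemma exists_iSeparates_of_countable {A B : Set (Set ℕ)} (hA : A.Countable) (hB : B.Countable)
    (horth : IOrthogonal I A B) : ∃ C, ISeparates I A B C := by
  obtain ⟨u, hu⟩ := (hA.insert ∅).exists_eq_range (insert_nonempty ∅ A)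
  obtain ⟨v, hv⟩ := (hB.insert ∅).exists_eq_range (insert_nonempty ∅ B)
  have huv : ∀ i j, u i ∩ v j ∈ I := by
    intro i j
    have hi : u i ∈ insert ∅ A := hu ▸ mem_range_self i
    have hj : v j ∈ insert ∅ B := hv ▸ mem_range_self j
    rcases hi with hi | hi
    · simpa [hi] using hempty
    rcases hj with hj | hj
    · simpa [hj] using hempty
    exact horth _ hi _ hj
  obtain ⟨hCA, hCB⟩ := iSeparates_range hempty hdown hunion huv
  exact ⟨_, fun s hs => hCA s (hu ▸ mem_insert_of_mem ∅ hs),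
    fun t ht => hCB t (hv ▸ mem_insert_of_mem ∅ ht)⟩

include hempty hunion in
lemma iSeparates_compl_sUnion {A B : Set (Set ℕ)} (hA : A.Finite) (horth : IOrthogonal I A B) :
    ISeparates I A B (⋃₀ A)ᶜ := by
  refine ⟨fun s hs => ?_, fun t ht => ?_⟩
  · rw [← sdiff_eq, sdiff_eq_empty.2 (subset_sUnion_of_mem hs)]
    exact hempty
  · rw [sdiff_compl, sUnion_eq_biUnion, inter_iUnion₂]
    exact biUnion_mem_of_finite hempty hunion hA fun s hs => inter_comm s t ▸ horth s hs t ht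

include hempty hunion in
lemma IsIGap.infinite_left {A B : Set (Set ℕ)} (h : IsIGap I A B) : A.Infinite :=
  fun hA => h.2 _ (iSeparates_compl_sUnion hempty hunion hA h.1)

include hempty hdown hunion in
lemma IsIGap.not_countable_right {A B : Set (Set ℕ)} (h : IsIGap I A B) (hA : A.Countable) :
    ¬ B.Countable := fun hB =>
  let ⟨C, hC⟩ := exists_iSeparates_of_countable hempty hdown hunion hA hB h.1
  h.2 C hC

include hempty hdown hunion in
lemma IsIGap.aleph_one_le_mk_right {A B : Set (Set ℕ)} (h : IsIGap I A B) (hA : A.Countable) :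
    ℵ₁ ≤ #B := by
  rw [aleph_one_le_iff, ← not_le, le_aleph0_iff_set_countable]
  exact h.not_countable_right hempty hdown hunion hA

include hempty hdown hunion in
lemma aleph_one_le_of_hasOmegaGap {lam : Cardinal} (h : HasOmegaGap I lam) : ℵ₁ ≤ lam := by
  obtain ⟨A, B, hgap, hA, rfl⟩ := h
  exact hgap.aleph_one_le_mk_right hempty hdown hunion (le_aleph0_iff_set_countable.1 hA.le)

include hempty hdown hunion in
lemma IsIGap.hasOmegaGap_aleph_one {A B : Set (Set ℕ)} (hgap : IsIGap I A B) (hA : A.Countable)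
    (hB : #B ≤ ℵ₁) : HasOmegaGap I ℵ₁ := by
  have := (hgap.infinite_left hempty hunion).to_subtype
  exact ⟨A, B, hgap, le_antisymm (le_aleph0_iff_set_countable.2 hA) (aleph0_le_mk _),
    le_antisymm hB (hgap.aleph_one_le_mk_right hempty hdown hunion hA)⟩

end Separation

def IsUniformOn (s : Set ℕ) (φ : Set ℕ → ℝ) : Prop :=
  ∀ x y : Set ℕ, x ⊆ s → y ⊆ s → x.ncard = y.ncard → φ x = φ y

open scoped Classical in
noncomputable def threshold (φ : Set ℕ → ℝ) (s : Set ℕ) (t : ℕ) : ℕ :=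
  Nat.findGreatest (fun c => ∃ x ⊆ s, x.ncard = c ∧ φ x ≤ t) s.ncard

section Threshold

open scoped Classical

variable {s : Set ℕ} {φ : Set ℕ → ℝ}

lemma threshold_mono {t u : ℕ} (h : t ≤ u) : threshold φ s t ≤ threshold φ s u :=
  Nat.findGreatest_mono_left (fun _ ⟨x, hxs, hx, hφx⟩ =>
    ⟨x, hxs, hx, hφx.trans (Nat.cast_le.2 h)⟩) _

variable (hs : s.Finite) (hφ : IsSubmeasureOn s φ) (hunif : IsUniformOn s φ)
include hs hφ hunif

lemma phi_le_iff_ncard_le_threshold {x : Set ℕ} (hx : x ⊆ s) {t : ℕ} :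
    φ x ≤ t ↔ x.ncard ≤ threshold φ s t := by
  refine ⟨fun h => Nat.le_findGreatest (ncard_le_ncard hx hs) ⟨x, hx, rfl, h⟩, fun h => ?_⟩
  obtain ⟨y, hys, hy, hφy⟩ := Nat.findGreatest_spec
    (P := fun c => ∃ x ⊆ s, x.ncard = c ∧ φ x ≤ t) (Nat.zero_le _)
    ⟨∅, empty_subset s, ncard_empty ℕ, hφ.1.trans_le (Nat.cast_nonneg t)⟩
  obtain ⟨z, hzy, hz⟩ := exists_subset_card_eq (h.trans hy.ge)
  calc φ x = φ z := hunif x z hx (hzy.trans hys) hz.symm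
    _ ≤ φ y := hφ.2.2.1 z y hzy hys
    _ ≤ t := hφy

lemma phi_le_add_of_ncard_le {x : Set ℕ} (hx : x ⊆ s) {t u : ℕ}
    (h : x.ncard ≤ threshold φ s t + threshold φ s u) : φ x ≤ t + u := by
  obtain ⟨y, hyx, hy⟩ := exists_subset_card_eq (min_le_left x.ncard (threshold φ s t))
  have hxy : (x \ y).ncard ≤ threshold φ s u := by
    rw [ncard_sdiff hyx (hs.subset (hyx.trans hx)), hy]
    omega
  calc φ x = φ (y ∪ x \ y) := by rw [union_sdiff_cancel hyx]
    _ ≤ φ y + φ (x \ y) := hφ.2.2.2 _ _ (hyx.trans hx) (sdiff_subset.trans hx)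
    _ ≤ t + u := add_le_add
        ((phi_le_iff_ncard_le_threshold hs hφ hunif (hyx.trans hx)).2
          (hy.trans_le (min_le_right _ _)))
        ((phi_le_iff_ncard_le_threshold hs hφ hunif (sdiff_subset.trans hx)).2 hxy)

lemma two_mul_threshold_le {t u : ℕ} (htu : 2 * t ≤ u) (hu : threshold φ s u < s.ncard) :
    2 * threshold φ s t ≤ threshold φ s u := by
  obtain ⟨x, hxs, hx⟩ := exists_subset_card_eq (min_le_right (2 * threshold φ s t) s.ncard)
  have hφx : φ x ≤ u := by
    refine (phi_le_add_of_ncard_le hs hφ hunif hxs (t := t) (u := t) (by omega)).trans ?_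
    exact_mod_cast (show t + t ≤ u by omega)
  have := (phi_le_iff_ncard_le_threshold hs hφ hunif hxs).1 hφx
  omega

end Threshold

noncomputable def nthIco (s : Set ℕ) (m n : ℕ) : Set ℕ := Nat.nth (· ∈ s) '' Ico m n

section NthIco

variable {s : Set ℕ}

lemma nthIco_mono {m m' n n' : ℕ} (hm : m' ≤ m) (hn : n ≤ n') :
    nthIco s m n ⊆ nthIco s m' n' :=
  image_mono (Ico_subset_Ico hm hn)

variable (hs : s.Finite)
include hs

lemma injOn_nth_mem : InjOn (Nat.nth (· ∈ s)) (Iio s.ncard) := by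
  simpa [ncard_eq_toFinset_card s hs] using Nat.nth_injOn (p := (· ∈ s)) hs

lemma nth_mem_of_lt_ncard {n : ℕ} (hn : n < s.ncard) : Nat.nth (· ∈ s) n ∈ s :=
  Nat.nth_mem_of_lt_card (p := (· ∈ s)) hs (by simpa [ncard_eq_toFinset_card s hs] using hn)

lemma nthIco_subset {m n : ℕ} (hn : n ≤ s.ncard) : nthIco s m n ⊆ s := by
  rintro _ ⟨y, hy, rfl⟩
  exact nth_mem_of_lt_ncard hs (hy.2.trans_le hn)

lemma ncard_nthIco {m n : ℕ} (hn : n ≤ s.ncard) : (nthIco s m n).ncard = n - m := by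
  rw [nthIco, ((injOn_nth_mem hs).mono fun y hy => hy.2.trans_le hn).ncard_image,
    ← Finset.coe_Ico, ncard_coe_finset, Nat.card_Ico]

lemma disjoint_nthIco {m n m' n' : ℕ} (h : n ≤ m') (hn' : n' ≤ s.ncard) :
    Disjoint (nthIco s m n) (nthIco s m' n') := by
  rw [disjoint_left]
  rintro _ ⟨y, hy, rfl⟩ ⟨y', hy', hyy'⟩
  obtain ⟨⟨-, hyn⟩, hmy', hy'n'⟩ := And.intro hy hy'
  have := injOn_nth_mem hs (hy'n'.trans_le hn') (show y < s.ncard by omega) hyy'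
  omega

end NthIco

section Piece

variable (φ : Set ℕ → ℝ) (s : Set ℕ)

/-- What remains, for a uniform `φ`, of `l` sets of submeasure `≤ k` whose union has
submeasure `> p` (see `isGoodPiece_of_witness`). -/
def IsGoodPiece (k l p : ℕ) : Prop :=
  threshold φ s p < l * threshold φ s k ∧ threshold φ s p < s.ncard

noncomputable def slotSize (r : ℕ) : ℕ := threshold φ s r + 1

noncomputable def numSlots (r p : ℕ) : ℕ := (threshold φ s p + 1) / slotSize φ s r

noncomputable def block (p : ℕ) : Set ℕ := nthIco s 0 (threshold φ s p + 1)

noncomputable def slot (r c : ℕ) : Set ℕ :=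
  nthIco s (c * slotSize φ s r) ((c + 1) * slotSize φ s r)

variable {φ s} {k l r p : ℕ}

lemma IsGoodPiece.one_le_threshold (h : IsGoodPiece φ s k l p) : 1 ≤ threshold φ s k := by
  by_contra h0
  have := h.1
  simp_all

lemma succ_mul_slotSize_le {c : ℕ} (hc : c < numSlots φ s r p) :
    (c + 1) * slotSize φ s r ≤ threshold φ s p + 1 :=
  (Nat.mul_le_mul_right _ hc).trans (Nat.div_mul_le_self _ _)

lemma slot_subset_block {c : ℕ} (hc : c < numSlots φ s r p) : slot φ s r c ⊆ block φ s p :=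
  nthIco_mono (Nat.zero_le _) (succ_mul_slotSize_le hc)

lemma numSlots_pos (hrp : r ≤ p) : 0 < numSlots φ s r p :=
  Nat.div_pos (Nat.succ_le_succ (threshold_mono hrp)) (Nat.succ_pos _)

lemma numSlots_le (hgood : IsGoodPiece φ s k l p) (hkr : k ≤ r) : numSlots φ s r p ≤ l := by
  have hT : threshold φ s p + 1 ≤ l * slotSize φ s r :=
    hgood.1.trans_le (Nat.mul_le_mul_left l ((threshold_mono hkr).trans (Nat.le_succ _)))
  exact Nat.div_le_of_le_mul (by rw [mul_comm]; exact hT)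

variable (hs : s.Finite)
include hs

lemma block_subset (hp : threshold φ s p < s.ncard) : block φ s p ⊆ s :=
  nthIco_subset hs hp

lemma slot_subset (hp : threshold φ s p < s.ncard) {c : ℕ} (hc : c < numSlots φ s r p) :
    slot φ s r c ⊆ s :=
  (slot_subset_block hc).trans (block_subset hs hp)

lemma ncard_slot (hp : threshold φ s p < s.ncard) {c : ℕ} (hc : c < numSlots φ s r p) :
    (slot φ s r c).ncard = slotSize φ s r := by
  rw [slot, ncard_nthIco hs ((succ_mul_slotSize_le hc).trans hp), add_mul, one_mul,
    Nat.add_sub_cancel_left]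

lemma pairwise_disjoint_slot (hp : threshold φ s p < s.ncard) :
    Pairwise (Function.onFun Disjoint fun c : Fin (numSlots φ s r p) => slot φ s r c) := by
  intro c c' hcc'
  wlog h : c < c' generalizing c c'
  · exact (this hcc'.symm (lt_of_le_of_ne (not_lt.1 h) hcc'.symm)).symm
  exact disjoint_nthIco hs (Nat.mul_le_mul_right _ h) ((succ_mul_slotSize_le c'.2).trans hp)

variable (hφ : IsSubmeasureOn s φ) (hunif : IsUniformOn s φ)
include hφ hunif

lemma phi_slot_le (hgood : IsGoodPiece φ s k l p) {c : ℕ} (hc : c < numSlots φ s r p) :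
    φ (slot φ s r c) ≤ r + k := by
  refine phi_le_add_of_ncard_le hs hφ hunif (slot_subset hs hgood.2 hc) ?_
  rw [ncard_slot hs hgood.2 hc, slotSize]
  exact Nat.add_le_add_left hgood.one_le_threshold _

/-- Up to submeasure `K ≤ r / 2` every slot lies in `C`, so `C` holds half of every slot; the
slots fill the block up to less than one slot, and `p ≥ 4 (κ + r)` makes that half larger than
submeasure `κ` allows. -/
lemma lt_phi_block_inter (hgood : IsGoodPiece φ s k l p) (hkr : k ≤ r) {K κ : ℕ}
    (hK : 2 * K ≤ r) (hp : 4 * (κ + r) ≤ p) {C : Set ℕ}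
    (hC : ∀ c < numSlots φ s r p, φ (slot φ s r c \ C) ≤ K) : κ < φ (block φ s p ∩ C) := by
  have hT := hgood.2
  have hr : 1 ≤ threshold φ s r := hgood.one_le_threshold.trans (threshold_mono hkr)
  have hKr : 2 * threshold φ s K ≤ threshold φ s r :=
    two_mul_threshold_le hs hφ hunif hK ((threshold_mono (by omega)).trans_lt hT)
  have hκr : 2 * threshold φ s κ + slotSize φ s r ≤ threshold φ s p := by
    have h₁ : 2 * threshold φ s (κ + r) ≤ threshold φ s (2 * (κ + r)) :=
      two_mul_threshold_le hs hφ hunif le_rfl ((threshold_mono (by omega)).trans_lt hT)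
    have h₂ : 2 * threshold φ s (2 * (κ + r)) ≤ threshold φ s p :=
      two_mul_threshold_le hs hφ hunif (by omega) hT
    have h₃ := threshold_mono (φ := φ) (s := s) (show κ ≤ κ + r by omega)
    have h₄ := threshold_mono (φ := φ) (s := s) (show r ≤ κ + r by omega)
    rw [slotSize]
    omega
  have hslot : ∀ c : Fin (numSlots φ s r p),
      slotSize φ s r - threshold φ s K ≤ (slot φ s r c ∩ C).ncard := by
    intro c
    have hsub := slot_subset hs hT c.2
    have h₁ :=
      (phi_le_iff_ncard_le_threshold hs hφ hunif (sdiff_subset.trans hsub)).1 (hC c c.2)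
    have h₂ := ncard_inter_add_ncard_sdiff_eq_ncard (slot φ s r c) C (hs.subset hsub)
    rw [ncard_slot hs hT c.2] at h₂
    omega
  have hsum : numSlots φ s r p * (slotSize φ s r - threshold φ s K) ≤ (block φ s p ∩ C).ncard :=
    calc numSlots φ s r p * (slotSize φ s r - threshold φ s K)
        ≤ ∑ c : Fin (numSlots φ s r p), (slot φ s r c ∩ C).ncard := by
          simpa using Finset.card_nsmul_le_sum Finset.univ _ _ fun c _ => hslot c
      _ = (⋃ c : Fin (numSlots φ s r p), slot φ s r c ∩ C).ncard := by
          rw [ncard_iUnion_of_finite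
            (fun c => (hs.subset (slot_subset hs hT c.2)).inter_of_left C)
            fun c c' h => (pairwise_disjoint_slot hs hT h).mono inter_subset_left
              inter_subset_left, finsum_eq_sum_of_fintype]
      _ ≤ (block φ s p ∩ C).ncard :=
          ncard_le_ncard
            (iUnion_subset fun c => inter_subset_inter_left C (slot_subset_block c.2))
            ((hs.subset (block_subset hs hT)).inter_of_left C)
  have hq : threshold φ s p + 1 < numSlots φ s r p * slotSize φ s r + slotSize φ s r :=
    Nat.lt_div_mul_add (Nat.succ_pos _)
  have hhalf : slotSize φ s r + 1 ≤ 2 * (slotSize φ s r - threshold φ s K) := by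
    rw [slotSize]; omega
  have := Nat.mul_le_mul_left (numSlots φ s r p) hhalf
  rw [← not_le, phi_le_iff_ncard_le_threshold hs hφ hunif
    (inter_subset_left.trans (block_subset hs hT))]
  nlinarith

end Piece

section GoodPieces

variable {φ : Set ℕ → ℝ} {s : Set ℕ}

lemma isGoodPiece_of_witness (hs : s.Finite) (hφ : IsSubmeasureOn s φ) (hunif : IsUniformOn s φ)
    {k l m : ℕ} {B : Finset (Set ℕ)} (hBs : ∀ b ∈ B, b ⊆ s) (hBl : B.card ≤ l)
    (hBk : ∀ b ∈ B, φ b ≤ k) (hBm : ¬ φ (⋃₀ (↑B : Set (Set ℕ))) ≤ m) :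
    IsGoodPiece φ s k l m := by
  have hU : ⋃₀ (↑B : Set (Set ℕ)) ⊆ s := sUnion_subset hBs
  rw [phi_le_iff_ncard_le_threshold hs hφ hunif hU, not_le] at hBm
  have hcard : (⋃₀ (↑B : Set (Set ℕ))).ncard ≤ l * threshold φ s k :=
    calc (⋃₀ (↑B : Set (Set ℕ))).ncard ≤ ∑ b ∈ B, b.ncard := by
          rw [sUnion_eq_biUnion]; exact Finset.set_ncard_biUnion_le B id
      _ ≤ ∑ _b ∈ B, threshold φ s k := Finset.sum_le_sum fun b hb =>
          (phi_le_iff_ncard_le_threshold hs hφ hunif (hBs b hb)).1 (hBk b hb)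
      _ ≤ l * threshold φ s k := by
          rw [Finset.sum_const, smul_eq_mul]; exact Nat.mul_le_mul_right _ hBl
  exact ⟨hBm.trans_le hcard, hBm.trans_le (ncard_le_ncard hU hs)⟩

lemma exists_infinite_isGoodPiece {I : Set (Set ℕ)} {a : ℕ → Set ℕ} {φ : ℕ → Set ℕ → ℝ}
    (hI : IsFragmentation I a φ) (hunif : ∀ i, IsUniformOn (a i) (φ i))
    (h : ¬ GraduallyFragmented a φ) :
    ∃ k : ℕ, ∃ l : ℕ → ℕ, ∀ p, {i | IsGoodPiece (φ i) (a i) k (l p) p}.Infinite := by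
  simp only [GraduallyFragmented, not_forall, not_exists] at h
  obtain ⟨k, hk⟩ := h
  choose l hl using hk
  refine ⟨k, l, fun p => Nat.frequently_atTop_iff_infinite.1 ?_⟩
  refine (not_eventually.1 (hl p)).mono fun i hi => ?_
  simp only [not_forall] at hi
  obtain ⟨B, hBs, hBl, hBk, hBm⟩ := hi
  exact isGoodPiece_of_witness (hI.1.2.1 i) (hI.2.1 i) (hunif i) hBs hBl hBk hBm

end GoodPieces

lemma exists_strictMono_forall_mem {S : ℕ → Set ℕ} (hS : ∀ n, (S n).Infinite) :
    ∃ g : ℕ → ℕ, StrictMono g ∧ ∀ n, g n ∈ S n := by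
  choose f hfS hf using fun n m => (hS n).exists_gt m
  let g : ℕ → ℕ := fun n => Nat.rec (f 0 0) (fun n gn => f (n + 1) gn) n
  refine ⟨g, strictMono_nat_of_lt_succ fun n => hf (n + 1) (g n), fun n => ?_⟩
  cases n with
  | zero => exact hfS 0 0
  | succ n => exact hfS (n + 1) (g n)

lemma exists_injective_forall_mem {β : Type*} [Countable β] {S : β → Set ℕ}
    (hS : ∀ b, (S b).Infinite) : ∃ ι : β → ℕ, Function.Injective ι ∧ ∀ b, ι b ∈ S b := by
  have := Encodable.ofCountable β
  obtain ⟨g, hg, hgS⟩ := exists_strictMono_forall_mem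
    (S := fun n => (Encodable.decode (α := β) n).elim univ S) fun n => by
      cases Encodable.decode (α := β) n <;> simp [hS, infinite_univ]
  exact ⟨g ∘ Encodable.encode, hg.injective.comp Encodable.encode_injective,
    fun b => by simpa using hgS (Encodable.encode b)⟩

lemma exists_infinite_setOf_of_not_countable {α : Type*} {X : Set α} (hX : ¬ X.Countable)
    {P : α → ℕ → Prop} (hP : ∀ x ∈ X, ∃ K, P x K) : ∃ K, {x ∈ X | P x K}.Infinite := by
  by_contra! h
  refine hX ((countable_iUnion fun K => (h K).countable).mono fun x hx => ?_)
  obtain ⟨K, hK⟩ := hP x hx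
  exact mem_iUnion.2 ⟨K, hx, hK⟩

def prefixList {α : Type*} (x : ℕ → α) (N : ℕ) : List α := List.ofFn fun i : Fin N => x i

lemma exists_injective_prefixList {α ι : Type*} [Finite ι] {v : ι → ℕ → α}
    (hv : Function.Injective v) : ∃ N, Function.Injective fun i => prefixList (v i) N := by
  have : ∀ᶠ N in atTop, ∀ i j, prefixList (v i) N = prefixList (v j) N → i = j := by
    refine eventually_all.2 fun i => eventually_all.2 fun j => ?_
    by_cases hij : i = j
    · exact Eventually.of_forall fun _ _ => hij
    obtain ⟨m, hm⟩ := Function.ne_iff.1 (hv.ne hij)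
    filter_upwards [eventually_gt_atTop m] with N hN h
    exact absurd (congrFun (List.ofFn_inj.1 h) ⟨m, hN⟩) hm
  obtain ⟨N, hN⟩ := this.exists
  exact ⟨N, fun i j h => hN i j h⟩

/-- `row` fixes the slot level `k + row` and `extra` the level `k + row + extra`; a real `x`
picks the slot numbered by the position of its length-`len` prefix in `codes`. -/
structure Block where
  row : ℕ
  extra : ℕ
  len : ℕ
  codes : List (List Bool)

instance : Countable Block :=
  Function.Injective.countable (f := fun b : Block => (b.row, b.extra, b.len, b.codes))
    fun ⟨_, _, _, _⟩ ⟨_, _, _, _⟩ h => by simpa using h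

def Block.level (k : ℕ) (b : Block) : ℕ := k + b.row + b.extra

section Construction

variable (a : ℕ → Set ℕ) (φ : ℕ → Set ℕ → ℝ) (k : ℕ) (ι : Block → ℕ)

noncomputable def Block.choice (b : Block) (x : ℕ → Bool) : ℕ :=
  b.codes.idxOf (prefixList x b.len) % numSlots (φ (ι b)) (a (ι b)) (k + b.row) (b.level k)

noncomputable def gapLeft (j : ℕ) : Set ℕ :=
  ⋃ b : Block, if b.row ≤ j then block (φ (ι b)) (a (ι b)) (b.level k) else ∅

noncomputable def gapRight (x : ℕ → Bool) : Set ℕ :=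
  ⋃ b : Block, slot (φ (ι b)) (a (ι b)) (k + b.row) (b.choice a φ k ι x)

lemma Block.choice_lt (b : Block) (x : ℕ → Bool) :
    b.choice a φ k ι x < numSlots (φ (ι b)) (a (ι b)) (k + b.row) (b.level k) :=
  Nat.mod_lt _ (numSlots_pos (Nat.le_add_right _ _))

lemma Block.choice_eq_mod {b : Block} {L : ℕ} {v : ℕ → ℕ → Bool}
    (hb : b.codes = List.ofFn fun c : Fin L => prefixList (v c) b.len)
    (hv : Function.Injective fun c : Fin L => prefixList (v c) b.len) {c : ℕ} (hc : c < L) :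
    b.choice a φ k ι (v c) = c % numSlots (φ (ι b)) (a (ι b)) (k + b.row) (b.level k) := by
  have := (List.nodup_ofFn.2 hv).idxOf_getElem c (by simpa using hc)
  rw [List.getElem_ofFn] at this
  rw [Block.choice, hb, this]

end Construction

section Gap

variable {I : Set (Set ℕ)} {a : ℕ → Set ℕ} {φ : ℕ → Set ℕ → ℝ} (hI : IsFragmentation I a φ)
  (hunif : ∀ i, IsUniformOn (a i) (φ i)) {k : ℕ} {l : ℕ → ℕ} {ι : Block → ℕ}
  (hι : Function.Injective ι)
  (hgood : ∀ b : Block, IsGoodPiece (φ (ι b)) (a (ι b)) k (l (b.level k)) (b.level k))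
include hI hgood

lemma ite_block_subset (j : ℕ) (b : Block) :
    (if b.row ≤ j then block (φ (ι b)) (a (ι b)) (b.level k) else ∅) ⊆ a (ι b) := by
  split_ifs
  exacts [block_subset (hI.1.2.1 _) (hgood b).2, empty_subset _]

lemma slot_choice_subset (x : ℕ → Bool) (b : Block) :
    slot (φ (ι b)) (a (ι b)) (k + b.row) (b.choice a φ k ι x) ⊆ a (ι b) :=
  slot_subset (hI.1.2.1 _) (hgood b).2 (b.choice_lt a φ k ι x)

include hunif hι

lemma gapLeft_inter_gapRight_mem (j : ℕ) (x : ℕ → Bool) :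
    gapLeft a φ k ι j ∩ gapRight a φ k ι x ∈ I := by
  rw [gapLeft, gapRight, hI.iUnion_inter_iUnion hι (ite_block_subset hI hgood j)
    (slot_choice_subset hI hgood x), hI.iUnion_mem_iff hι fun b =>
      inter_subset_right.trans (slot_choice_subset hI hgood x b)]
  refine ⟨j + 2 * k, fun b => ?_⟩
  split_ifs with hb
  · have := phi_slot_le (hI.1.2.1 _) (hI.2.1 _) (hunif _) (hgood b) (b.choice_lt a φ k ι x)
    rw [inter_eq_right.2 (slot_subset_block (b.choice_lt a φ k ι x))]
    push_cast at this ⊢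
    linarith [(Nat.cast_le (α := ℝ)).2 hb]
  · rw [empty_inter, (hI.2.1 _).1]
    positivity

lemma not_iSeparates_gapLeft_gapRight {X : Set (ℕ → Bool)} (hX : ¬ X.Countable) (C : Set ℕ) :
    ¬ ISeparates I (range (gapLeft a φ k ι)) (gapRight a φ k ι '' X) C := by
  rintro ⟨hCA, hCB⟩
  obtain ⟨K, hK⟩ := exists_infinite_setOf_of_not_countable hX (P := fun x K => ∀ b : Block,
      φ (ι b) (slot (φ (ι b)) (a (ι b)) (k + b.row) (b.choice a φ k ι x) \ C) ≤ K)
    fun x hx => by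
      have := hCB _ (mem_image_of_mem _ hx)
      rwa [gapRight, iUnion_sdiff, hI.iUnion_mem_iff hι fun b =>
        sdiff_subset.trans (slot_choice_subset hI hgood x b)] at this
  have hA := hCA _ (mem_range_self (2 * K))
  rw [gapLeft, iUnion_inter, hI.iUnion_mem_iff hι fun b =>
    inter_subset_left.trans (ite_block_subset hI hgood _ b)] at hA
  obtain ⟨κ, hκ⟩ := hA
  obtain ⟨v, hv, hvK⟩ : ∃ v : ℕ → ℕ → Bool, Function.Injective v ∧ ∀ c, v c ∈ _ :=
    ⟨fun c => hK.natEmbedding _ c, Subtype.val_injective.comp (hK.natEmbedding _).injective,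
      fun c => (hK.natEmbedding _ c).2⟩
  set p := 4 * (κ + (k + 2 * K))
  obtain ⟨N, hN⟩ := exists_injective_prefixList (v := fun c : Fin (l p) => v c)
    (hv.comp Fin.val_injective)
  -- the `v c` share the bound `K`, and in this block `v c` picks slot `c`
  let b : Block :=
    ⟨2 * K, 4 * κ + 3 * (k + 2 * K), N, List.ofFn fun c : Fin (l p) => prefixList (v c) N⟩
  have hbp : b.level k = p := by simp only [Block.level, b, p]; ring
  have hslots : ∀ c < numSlots (φ (ι b)) (a (ι b)) (k + 2 * K) (b.level k),
      φ (ι b) (slot (φ (ι b)) (a (ι b)) (k + 2 * K) c \ C) ≤ K := by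
    intro c hc
    have hcL : c < l p := hbp ▸ hc.trans_le (numSlots_le (hgood b) (Nat.le_add_right _ _))
    have := (hvK c).2 b
    rwa [Block.choice_eq_mod a φ k ι (b := b) rfl hN hcL, Nat.mod_eq_of_lt hc] at this
  have hlt := lt_phi_block_inter (hI.1.2.1 _) (hI.2.1 _) (hunif _) (hgood b)
    (Nat.le_add_right k _) le_add_self hbp.ge hslots
  have hle := hκ b
  rw [if_pos le_rfl] at hle
  linarith

end Gap

theorem IsFragmentation.hasOmegaGap_aleph_one {I : Set (Set ℕ)} {a : ℕ → Set ℕ}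
    {φ : ℕ → Set ℕ → ℝ} (hI : IsFragmentation I a φ) (hunif : ∀ i, IsUniformOn (a i) (φ i))
    (h : ¬ GraduallyFragmented a φ) : HasOmegaGap I ℵ₁ := by
  obtain ⟨k, l, hl⟩ := exists_infinite_isGoodPiece hI hunif h
  obtain ⟨ι, hι, hgood⟩ := exists_injective_forall_mem fun b : Block => hl (b.level k)
  obtain ⟨X, hX⟩ := le_mk_iff_exists_set.1
    (show ℵ₁ ≤ #(ℕ → Bool) by simpa using aleph_one_le_continuum)
  have hXc : ¬ X.Countable := by
    rw [← le_aleph0_iff_set_countable, hX, not_le]; exact aleph0_lt_aleph_one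
  have horth : IOrthogonal I (range (gapLeft a φ k ι)) (gapRight a φ k ι '' X) := by
    rintro _ ⟨j, rfl⟩ _ ⟨x, -, rfl⟩
    exact gapLeft_inter_gapRight_mem hI hunif hι hgood j x
  exact IsIGap.hasOmegaGap_aleph_one hI.empty_mem (fun _ _ => hI.mem_of_subset)
    (fun _ _ => hI.union_mem) ⟨horth, not_iSeparates_gapLeft_gapRight hI hunif hι hgood hXc⟩
    (countable_range _) (hX ▸ mk_image_le)

/-- If `I = I⟨a_j, φ_j⟩` is a fragmented ideal that is not gradually fragmented and all
the submeasures `φ_j` are uniform (depend only on the cardinality of the set), then the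
Rothberger number `𝔟(I)` equals `ℵ₁`. -/
theorem rothberger_uniform_not_gradually_fragmented_eq_aleph_one
    (a : ℕ → Set ℕ) (φ : ℕ → Set ℕ → ℝ) (I : Set (Set ℕ))
    (hfrag : IsFragmentation I a φ)
    (hnotgrad : ¬ GraduallyFragmented a φ)
    (huniform : ∀ j, ∀ x y : Set ℕ, x ⊆ a j → y ⊆ a j → x.ncard = y.ncard → φ j x = φ j y) :
    HasOmegaGap I (aleph 1) ∧
    ∀ lam : Cardinal, HasOmegaGap I lam → aleph 1 ≤ lam :=
  ⟨hfrag.hasOmegaGap_aleph_one huniform hnotgrad, fun _ => aleph_one_le_of_hasOmegaGap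
    hfrag.empty_mem (fun _ _ => hfrag.mem_of_subset) (fun _ _ => hfrag.union_mem)⟩
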